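/- arXiv:1902.01686 — 2 statements merged into one kernel-verified Lean document; each statement's English description precedes it below -/
import Mathlib

section
/- Let y_L be an L-layer neural network with 1-Lipschitz componentwise activation φ, weights W_1,...,W_L, biases b_1,...,b_L. Let x̂ = ξ ⊙ x where ξ_i = 1 - ζ_i with ζ_i i.i.d. Bernoulli(p) (so each input coordinate is zeroed independently with probability p). Then componentwise, E|y_L(x̂) - y_L(x)| ≤ p · |W_L| · |W_{L-1}| · ... · |W_1| · |x|, where |A| denotes the matrix of absolute values and the inequality is entrywise. -/
open MeasureTheory ProbabilityTheory

def nnHidden (n : ℕ → ℕ) (W : ∀ l, Matrix (Fin (n (l + 1))) (Fin (n l)) ℝ)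
    (b : ∀ l, Fin (n (l + 1)) → ℝ) (φ : ℝ → ℝ) :
    (l : ℕ) → (Fin (n 0) → ℝ) → (Fin (n l) → ℝ)
  | 0 => fun x => x
  | l + 1 => fun x i => φ (((W l).mulVec (nnHidden n W b φ l x) + b l) i)

def nnOutput (n : ℕ → ℕ) (W : ∀ l, Matrix (Fin (n (l + 1))) (Fin (n l)) ℝ)
    (b : ∀ l, Fin (n (l + 1)) → ℝ) (φ : ℝ → ℝ) (L : ℕ) (x : Fin (n 0) → ℝ) :
    Fin (n (L + 1)) → ℝ :=
  (W L).mulVec (nnHidden n W b φ L x) + b L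

/-- The vector `|W_l|⋯|W_1||x|`, built up layer by layer from the entrywise
absolute values of the weight matrices and of the input. -/
def absChain (n : ℕ → ℕ) (W : ∀ l, Matrix (Fin (n (l + 1))) (Fin (n l)) ℝ)
    (x : Fin (n 0) → ℝ) : (l : ℕ) → Fin (n l) → ℝ
  | 0 => fun i => |x i|
  | l + 1 => Matrix.mulVec (Matrix.of fun i j => |W l i j|) (absChain n W x l)

def IsBernoulliRV {Ω : Type*} [MeasurableSpace Ω] (μ : Measure Ω) (p : ℝ) (X : Ω → ℝ) : Prop :=
  μ {ω | X ω = 1} = ENNReal.ofReal p ∧ μ {ω | X ω = 0} = ENNReal.ofReal (1 - p)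

open Matrix

/-! Perturbing the input by `d` moves coordinate `k` of layer `l` by at most
`(|W_l|⋯|W_1||d|)_k`, because each layer is affine with weights `W_l` followed by a
1-Lipschitz `φ`. For the crashed input `d_i = -ζ_i x_i`, so `|d| = |ζ| ⊙ |x|`, and the bound
is linear in `|ζ|`; taking expectations with `E|ζ_i| = p` gives the claim. -/

theorem abs_sub_affine_apply_le {m k : Type*} [Fintype k] (A : Matrix m k ℝ) (c : m → ℝ)
    (u v : k → ℝ) (i : m) :
    |(A *ᵥ u + c) i - (A *ᵥ v + c) i| ≤ ∑ j, |A i j| * |u j - v j| :=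
  calc |(A *ᵥ u + c) i - (A *ᵥ v + c) i| = |∑ j, A i j * (u j - v j)| := by
        simp [mulVec, dotProduct, mul_sub, Finset.sum_sub_distrib]
    _ ≤ ∑ j, |A i j * (u j - v j)| := Finset.abs_sum_le_sum_abs _ _
    _ = ∑ j, |A i j| * |u j - v j| := by simp_rw [abs_mul]

section Network

variable {n : ℕ → ℕ} (W : ∀ l, Matrix (Fin (n (l + 1))) (Fin (n l)) ℝ)

def absWeightProd : (l : ℕ) → Matrix (Fin (n l)) (Fin (n 0)) ℝ
  | 0 => 1
  | l + 1 => (Matrix.of fun i j => |W l i j|) * absWeightProd l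

theorem absChain_eq_mulVec (x : Fin (n 0) → ℝ) (l : ℕ) :
    absChain n W x l = absWeightProd W l *ᵥ fun i => |x i| := by
  induction l with
  | zero => simp [absChain, absWeightProd]
  | succ l ih => rw [absChain, ih, absWeightProd, mulVec_mulVec]

theorem abs_sub_affine_apply_le_absChain {l : ℕ} (d : Fin (n 0) → ℝ) (c : Fin (n (l + 1)) → ℝ)
    {a a' : Fin (n l) → ℝ} (h : ∀ j, |a j - a' j| ≤ absChain n W d l j) (k : Fin (n (l + 1))) :
    |(W l *ᵥ a + c) k - (W l *ᵥ a' + c) k| ≤ absChain n W d (l + 1) k :=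
  (abs_sub_affine_apply_le _ _ _ _ _).trans <|
    Finset.sum_le_sum fun j _ => mul_le_mul_of_nonneg_left (h j) (abs_nonneg _)

variable (b : ∀ l, Fin (n (l + 1)) → ℝ) {φ : ℝ → ℝ} (hφ : ∀ a b : ℝ, |φ a - φ b| ≤ |a - b|)
include hφ

theorem abs_sub_nnHidden_le (u v : Fin (n 0) → ℝ) (l : ℕ) (k : Fin (n l)) :
    |nnHidden n W b φ l u k - nnHidden n W b φ l v k| ≤ absChain n W (u - v) l k := by
  induction l with
  | zero => simp [nnHidden, absChain]
  | succ l ih => exact (hφ _ _).trans (abs_sub_affine_apply_le_absChain W _ _ ih k)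

theorem abs_sub_nnOutput_le (u v : Fin (n 0) → ℝ) (L : ℕ) (k : Fin (n (L + 1))) :
    |nnOutput n W b φ L u k - nnOutput n W b φ L v k| ≤ absChain n W (u - v) (L + 1) k :=
  abs_sub_affine_apply_le_absChain W _ _ (abs_sub_nnHidden_le W b hφ u v L) k

end Network

namespace IsBernoulliRV

variable {Ω : Type*} [MeasurableSpace Ω] {μ : Measure Ω} [IsProbabilityMeasure μ] {p : ℝ}
  {X : Ω → ℝ}

theorem ae_eq_one_or_eq_zero (hB : IsBernoulliRV μ p X) (hX : Measurable X) (hp0 : 0 ≤ p)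
    (hp1 : p ≤ 1) : ∀ᵐ ω ∂μ, X ω = 1 ∨ X ω = 0 := by
  have h1 : MeasurableSet {ω | X ω = 1} := hX (measurableSet_singleton 1)
  have h0 : MeasurableSet {ω | X ω = 0} := hX (measurableSet_singleton 0)
  have hdisj : Disjoint {ω | X ω = 1} {ω | X ω = 0} :=
    Set.disjoint_left.2 fun ω (hω1 : X ω = 1) (hω0 : X ω = 0) => one_ne_zero (hω1.symm.trans hω0)
  have hunion : μ ({ω | X ω = 1} ∪ {ω | X ω = 0}) = 1 := by
    rw [measure_union hdisj h0, hB.1, hB.2, ← ENNReal.ofReal_add hp0 (sub_nonneg.2 hp1)]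
    norm_num
  exact (ae_iff_measure_eq (h1.union h0).nullMeasurableSet).2 (hunion.trans measure_univ.symm)

theorem abs_ae_eq_indicator (hB : IsBernoulliRV μ p X) (hX : Measurable X) (hp0 : 0 ≤ p)
    (hp1 : p ≤ 1) : (fun ω => |X ω|) =ᵐ[μ] {ω | X ω = 1}.indicator 1 := by
  filter_upwards [hB.ae_eq_one_or_eq_zero hX hp0 hp1] with ω hω
  rcases hω with hω | hω <;> simp [hω]

theorem integrable_abs (hB : IsBernoulliRV μ p X) (hX : Measurable X) (hp0 : 0 ≤ p)
    (hp1 : p ≤ 1) : Integrable (fun ω => |X ω|) μ :=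
  ((integrable_const 1).indicator (hX (measurableSet_singleton 1))).congr
    (hB.abs_ae_eq_indicator hX hp0 hp1).symm

theorem integral_abs (hB : IsBernoulliRV μ p X) (hX : Measurable X) (hp0 : 0 ≤ p)
    (hp1 : p ≤ 1) : ∫ ω, |X ω| ∂μ = p := by
  have h1 : MeasurableSet {ω | X ω = 1} := hX (measurableSet_singleton 1)
  rw [integral_congr_ae (hB.abs_ae_eq_indicator hX hp0 hp1), integral_indicator_one h1,
    measureReal_def, hB.1, ENNReal.toReal_ofReal hp0]

end IsBernoulliRV

theorem stmt_3_general {Ω : Type*} [MeasurableSpace Ω] (μ : Measure Ω) [IsProbabilityMeasure μ]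
    (n : ℕ → ℕ) (L : ℕ)
    (W : ∀ l, Matrix (Fin (n (l + 1))) (Fin (n l)) ℝ)
    (b : ∀ l, Fin (n (l + 1)) → ℝ) (φ : ℝ → ℝ)
    (hφ : ∀ a b : ℝ, |φ a - φ b| ≤ |a - b|)
    (p : ℝ) (hp0 : 0 ≤ p) (hp1 : p ≤ 1)
    (ζ : Fin (n 0) → Ω → ℝ) (hmeas : ∀ i, Measurable (ζ i))
    (hBern : ∀ i, IsBernoulliRV μ p (ζ i))
    (x : Fin (n 0) → ℝ)
    (xh : Ω → Fin (n 0) → ℝ) (hxh : ∀ ω i, xh ω i = (1 - ζ i ω) * x i) :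
    ∀ k, (∫ ω, |nnOutput n W b φ L (xh ω) k - nnOutput n W b φ L x k| ∂μ) ≤
      p * absChain n W x (L + 1) k := by
  intro k
  set M := absWeightProd W (L + 1)
  have hcrash : ∀ ω i, |xh ω i - x i| = |x i| * |ζ i ω| := fun ω i => by
    rw [hxh, show (1 - ζ i ω) * x i - x i = -(x i * ζ i ω) by ring, abs_neg, abs_mul]
  have hbound : ∀ ω, |nnOutput n W b φ L (xh ω) k - nnOutput n W b φ L x k| ≤
      ∑ i, M k i * |x i| * |ζ i ω| := fun ω =>
    (abs_sub_nnOutput_le W b hφ _ _ L k).trans_eq <| by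
      simp [absChain_eq_mulVec, M, mulVec, dotProduct, hcrash, mul_assoc]
  have hint : ∀ i, Integrable (fun ω => M k i * |x i| * |ζ i ω|) μ := fun i =>
    ((hBern i).integrable_abs (hmeas i) hp0 hp1).const_mul _
  calc ∫ ω, |nnOutput n W b φ L (xh ω) k - nnOutput n W b φ L x k| ∂μ
      ≤ ∫ ω, ∑ i, M k i * |x i| * |ζ i ω| ∂μ :=
        integral_mono_of_nonneg (ae_of_all _ fun _ => abs_nonneg _)
          (integrable_finsetSum _ fun i _ => hint i) (ae_of_all _ hbound)
    _ = ∑ i, M k i * |x i| * p := by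
        rw [integral_finsetSum _ fun i _ => hint i]
        simp_rw [integral_const_mul, (hBern _).integral_abs (hmeas _) hp0 hp1]
    _ = p * absChain n W x (L + 1) k := by
        simp [absChain_eq_mulVec, M, mulVec, dotProduct, Finset.mul_sum, mul_comm]

/-- Absolute value bound (bound b2): for independent Bernoulli(p) input crashes,
entrywise `E|y_L(ξ⊙x) - y_L(x)| ≤ p·(|W_L|⋯|W_1||x|)`. -/
theorem stmt_3 {Ω : Type*} [MeasurableSpace Ω] (μ : Measure Ω) [IsProbabilityMeasure μ]
    (n : ℕ → ℕ) (L : ℕ)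
    (W : ∀ l, Matrix (Fin (n (l + 1))) (Fin (n l)) ℝ)
    (b : ∀ l, Fin (n (l + 1)) → ℝ) (φ : ℝ → ℝ)
    (hφ : ∀ a b : ℝ, |φ a - φ b| ≤ |a - b|)
    (p : ℝ) (hp0 : 0 ≤ p) (hp1 : p ≤ 1)
    (ζ : Fin (n 0) → Ω → ℝ) (hmeas : ∀ i, Measurable (ζ i))
    (hBern : ∀ i, IsBernoulliRV μ p (ζ i))
    (hindep : iIndepFun ζ μ)
    (x : Fin (n 0) → ℝ)
    (xh : Ω → Fin (n 0) → ℝ) (hxh : ∀ ω i, xh ω i = (1 - ζ i ω) * x i) :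
    ∀ k, (∫ ω, |nnOutput n W b φ L (xh ω) k - nnOutput n W b φ L x k| ∂μ) ≤
      p * absChain n W x (L + 1) k :=
  stmt_3_general μ n L W b φ hφ p hp0 hp1 ζ hmeas hBern x xh hxh
end

section
/- Let W: [0,1]² → ℝ be continuous with ∫∫|W(t,t')|dt dt' > 0 and suppose ∫ (∫|W(t,t')|dt)² dt' > 0. For each n, define W^i = Σ_{j=1}^n |W((i-1)/(n-1), (j-1)/(n-1))|/n. Then (Σ_{i=1}^n W^i)² / (n·Σ_{i=1}^n (W^i)²) → (∫∫|W(t,t')|dt dt')² / ∫(∫|W(t,t')|dt')² dt as n → ∞. -/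
/-!
`rowSum W n i` is the average of `t' ↦ |W xᵢ t'|` over the grid `xⱼ = j/(n-1)`. Since `W` is
uniformly continuous on the square, such grid averages converge to `g xᵢ = ∫ |W xᵢ t'| dt'`
uniformly in the row `xᵢ`. Hence `(1/n) ∑ᵢ rowSum` and `(1/n) ∑ᵢ rowSum²` are grid averages of
functions converging uniformly to the continuous functions `g` and `g²`, so they tend to `∫ g`
and `∫ g²`; as `∫ g² > 0`, the ratio tends to `(∫ g)² / ∫ g²`.
-/

open MeasureTheory Filter

/-- Discretized row sums of a continuous weight function. -/
noncomputable def rowSum (W : ℝ → ℝ → ℝ) (n : ℕ) (i : ℕ) : ℝ :=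
  (∑ j ∈ Finset.range n, |W ((i : ℝ) / ((n : ℝ) - 1)) ((j : ℝ) / ((n : ℝ) - 1))|) / n

open Set Topology

noncomputable def gridNode (n i : ℕ) : ℝ := i / ((n : ℝ) - 1)

noncomputable def gridAverage (n : ℕ) (h : ℝ → ℝ) : ℝ :=
  (∑ i ∈ Finset.range n, h (gridNode n i)) / n

lemma gridNode_mem_Icc_div {n i : ℕ} (hi : i < n) :
    gridNode n i ∈ Icc ((i : ℝ) / n) ((i + 1) / n) := by
  rcases Nat.lt_or_ge n 2 with hn | hn
  · -- for `n = 1` the only node is `0 / 0 = 0`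
    obtain rfl : i = 0 := by omega
    simp [gridNode]
  · have hn' : (2 : ℝ) ≤ n := by exact_mod_cast hn
    have hi' : (i : ℝ) + 1 ≤ n := by exact_mod_cast hi
    constructor
    · exact div_le_div_of_nonneg_left (by positivity) (by linarith) (by linarith)
    · rw [gridNode, div_le_div_iff₀ (by linarith) (by linarith)]
      nlinarith

lemma gridNode_mem_Icc {n i : ℕ} (hi : i < n) : gridNode n i ∈ Icc (0 : ℝ) 1 :=
  Icc_subset_Icc (by positivity) (div_le_one_of_le₀ (by exact_mod_cast hi) (by positivity))
    (gridNode_mem_Icc_div hi)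

lemma abs_mul_sub_intervalIntegral_le {h : ℝ → ℝ} {a b c ε : ℝ} (hab : a ≤ b)
    (hh : ContinuousOn h (Icc a b)) (hc : ∀ t ∈ Icc a b, |c - h t| ≤ ε) :
    |(b - a) * c - ∫ t in a..b, h t| ≤ ε * (b - a) := by
  rw [← smul_eq_mul, ← intervalIntegral.integral_const,
    ← intervalIntegral.integral_sub intervalIntegrable_const (hh.intervalIntegrable_of_Icc hab)]
  simpa [abs_of_nonneg (sub_nonneg.2 hab)] using
    intervalIntegral.norm_integral_le_of_norm_le_const (f := fun t => c - h t)
      fun t ht => hc t (Ioc_subset_Icc_self (uIoc_of_le hab ▸ ht))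

lemma abs_gridAverage_sub_integral_le {h : ℝ → ℝ} (hh : ContinuousOn h (Icc 0 1)) {n : ℕ}
    (hn : 0 < n) {ε : ℝ}
    (hmod : ∀ s ∈ Icc (0 : ℝ) 1, ∀ t ∈ Icc (0 : ℝ) 1, |s - t| ≤ 1 / n → |h s - h t| ≤ ε) :
    |gridAverage n h - ∫ t in Icc (0 : ℝ) 1, h t| ≤ ε := by
  have hn' : (0 : ℝ) < n := by exact_mod_cast hn
  set a : ℕ → ℝ := fun i => i / n with ha
  have hstep : ∀ i, a (i + 1) - a i = 1 / n := fun i => by simp only [ha]; push_cast; ring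
  have hle : ∀ i, a i ≤ a (i + 1) := fun i => by linarith [hstep i, one_div_pos.2 hn']
  have hcell : ∀ i < n, Icc (a i) (a (i + 1)) ⊆ Icc 0 1 := fun i hi =>
    Icc_subset_Icc (by positivity)
      (div_le_one_of_le₀ (by exact_mod_cast Nat.succ_le_of_lt hi) hn'.le)
  have hsplit :
      ∫ t in Icc (0 : ℝ) 1, h t = ∑ i ∈ Finset.range n, ∫ t in a i..a (i + 1), h t := by
    rw [integral_Icc_eq_integral_Ioc, ← intervalIntegral.integral_of_le zero_le_one,
      intervalIntegral.sum_integral_adjacent_intervals fun i hi =>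
        (hh.mono (hcell i hi)).intervalIntegrable_of_Icc (hle i)]
    simp [ha, hn'.ne']
  have hterm : ∀ i ∈ Finset.range n,
      |1 / n * h (gridNode n i) - ∫ t in a i..a (i + 1), h t| ≤ ε * (1 / n) := by
    intro i hi
    have hi := Finset.mem_range.1 hi
    have hnode := gridNode_mem_Icc_div hi
    rw [← hstep i]
    refine abs_mul_sub_intervalIntegral_le (hle i) (hh.mono (hcell i hi))
      fun t ht => hmod _ (gridNode_mem_Icc hi) _ (hcell i hi ht) ?_
    rw [← hstep i, abs_le]
    simp only [ha, mem_Icc] at ht ⊢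
    push_cast at ht ⊢
    constructor <;> linarith [ht.1, ht.2, hnode.1, hnode.2]
  calc |gridAverage n h - ∫ t in Icc (0 : ℝ) 1, h t|
      = |∑ i ∈ Finset.range n, (1 / n * h (gridNode n i) - ∫ t in a i..a (i + 1), h t)| := by
        rw [hsplit, gridAverage, Finset.sum_sub_distrib, ← Finset.mul_sum, one_div_mul_eq_div]
    _ ≤ ∑ _i ∈ Finset.range n, ε * (1 / n) :=
        (Finset.abs_sum_le_sum_abs _ _).trans (Finset.sum_le_sum hterm)
    _ = ε := by rw [Finset.sum_const, Finset.card_range, nsmul_eq_mul]; field_simp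

theorem tendstoUniformlyOn_gridAverage {α : Type*} [PseudoMetricSpace α] {F : α → ℝ → ℝ}
    {K : Set α} (hK : IsCompact K) (hF : ContinuousOn (Function.uncurry F) (K ×ˢ Icc 0 1)) :
    TendstoUniformlyOn (fun n x => gridAverage n (F x)) (fun x => ∫ t in Icc (0 : ℝ) 1, F x t)
      atTop K := by
  rw [Metric.tendstoUniformlyOn_iff]
  intro ε hε
  obtain ⟨δ, hδ, hFδ⟩ := Metric.uniformContinuousOn_iff.1
    ((hK.prod isCompact_Icc).uniformContinuousOn_of_continuous hF) (ε / 2) (half_pos hε)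
  filter_upwards [eventually_gt_atTop 0,
    tendsto_one_div_atTop_nhds_zero_nat.eventually (gt_mem_nhds hδ)] with n hn hnδ x hx
  have hFx : ContinuousOn (F x) (Icc 0 1) :=
    hF.comp (Continuous.prodMk_right x).continuousOn fun t ht => mk_mem_prod hx ht
  rw [dist_comm, Real.dist_eq]
  refine (abs_gridAverage_sub_integral_le hFx hn fun s hs t ht hst => ?_).trans_lt
    (half_lt_self hε)
  have := hFδ (x, s) (mk_mem_prod hx hs) (x, t) (mk_mem_prod hx ht)
    (by rw [dist_prod_same_left, Real.dist_eq]; linarith)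
  exact (Real.dist_eq _ _ ▸ this).le

theorem continuousOn_setIntegral_Icc_of_continuousOn_uncurry {α : Type*} [PseudoMetricSpace α]
    {F : α → ℝ → ℝ} {K : Set α} (hK : IsCompact K)
    (hF : ContinuousOn (Function.uncurry F) (K ×ˢ Icc 0 1)) :
    ContinuousOn (fun x => ∫ t in Icc (0 : ℝ) 1, F x t) K :=
  (tendstoUniformlyOn_gridAverage hK hF).continuousOn <| Frequently.of_forall fun _ =>
    (continuousOn_finsetSum _ fun _ hi => hF.comp (Continuous.prodMk_left _).continuousOn
      fun _ hx => mk_mem_prod hx (gridNode_mem_Icc (Finset.mem_range.1 hi))).div_const _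

theorem tendsto_gridAverage {h : ℝ → ℝ} (hh : ContinuousOn h (Icc 0 1)) :
    Tendsto (fun n => gridAverage n h) atTop (𝓝 (∫ t in Icc (0 : ℝ) 1, h t)) :=
  (tendstoUniformlyOn_gridAverage (F := fun (_ : ℝ) => h) isCompact_singleton
    (hh.comp continuousOn_snd fun _ hp => hp.2)).tendsto_at (mem_singleton 0)

lemma abs_gridAverage_sub_le {u v : ℝ → ℝ} {ε : ℝ} (hε : 0 ≤ ε)
    (huv : ∀ t ∈ Icc (0 : ℝ) 1, |u t - v t| ≤ ε) (n : ℕ) :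
    |gridAverage n u - gridAverage n v| ≤ ε := by
  rcases n.eq_zero_or_pos with rfl | hn
  · simpa [gridAverage] using hε
  have hn' : (0 : ℝ) < n := by exact_mod_cast hn
  rw [gridAverage, gridAverage, ← sub_div, ← Finset.sum_sub_distrib, abs_div, abs_of_pos hn',
    div_le_iff₀ hn']
  calc |∑ i ∈ Finset.range n, (u (gridNode n i) - v (gridNode n i))|
      ≤ ∑ _i ∈ Finset.range n, ε := (Finset.abs_sum_le_sum_abs _ _).trans <|
        Finset.sum_le_sum fun i hi => huv _ (gridNode_mem_Icc (Finset.mem_range.1 hi))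
    _ = ε * n := by simp [mul_comm]

theorem tendsto_gridAverage_of_tendstoUniformlyOn {F : ℕ → ℝ → ℝ} {f : ℝ → ℝ}
    (hf : ContinuousOn f (Icc 0 1)) (hF : TendstoUniformlyOn F f atTop (Icc 0 1)) :
    Tendsto (fun n => gridAverage n (F n)) atTop (𝓝 (∫ t in Icc (0 : ℝ) 1, f t)) := by
  have hdiff : Tendsto (fun n => gridAverage n (F n) - gridAverage n f) atTop (𝓝 0) := by
    rw [Metric.tendsto_nhds]
    intro ε hε
    filter_upwards [Metric.tendstoUniformlyOn_iff.1 hF (ε / 2) (half_pos hε)] with n hn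
    rw [dist_zero_right, Real.norm_eq_abs]
    refine (abs_gridAverage_sub_le (half_pos hε).le (fun t ht => ?_) n).trans_lt (half_lt_self hε)
    rw [abs_sub_comm, ← Real.dist_eq]
    exact (hn t ht).le
  simpa using hdiff.add (tendsto_gridAverage hf)

theorem TendstoUniformlyOn.comp_of_isBounded {ι α β γ : Type*} [PseudoMetricSpace β]
    [ProperSpace β] [UniformSpace γ] {p : Filter ι} {F : ι → α → β} {f : α → β} {K : Set α}
    {φ : β → γ} (h : TendstoUniformlyOn F f p K) (hf : Bornology.IsBounded (f '' K))
    (hφ : Continuous φ) :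
    TendstoUniformlyOn (fun i x => φ (F i x)) (fun x => φ (f x)) p K := by
  have hs : IsCompact (Metric.cthickening 1 (f '' K)) :=
    Metric.isCompact_of_isClosed_isBounded Metric.isClosed_cthickening hf.cthickening
  refine (hs.uniformContinuousOn_of_continuous hφ.continuousOn).comp_tendstoUniformlyOn_eventually
    ?_ (fun x hx => Metric.self_subset_cthickening _ (mem_image_of_mem f hx)) h
  filter_upwards [Metric.tendstoUniformlyOn_iff.1 h 1 one_pos] with i hi x hx
  exact Metric.mem_cthickening_of_dist_le _ (f x) 1 _ (mem_image_of_mem f hx)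
    (dist_comm (f x) _ ▸ (hi x hx).le)

lemma sq_div_mul_eq_div_sq_div {a b c : ℝ} (hc : c ≠ 0) :
    a ^ 2 / (c * b) = (a / c) ^ 2 / (b / c) := by
  rw [div_pow, div_div_div_eq, sq c, mul_assoc, mul_comm (a ^ 2), mul_div_mul_left _ _ hc]

theorem stmt_17_general (W : ℝ → ℝ → ℝ)
    (hW : ContinuousOn (Function.uncurry W) (Set.Icc (0 : ℝ) 1 ×ˢ Set.Icc (0 : ℝ) 1))
    (hpos2 : 0 < ∫ t in Set.Icc (0 : ℝ) 1, (∫ t' in Set.Icc (0 : ℝ) 1, |W t t'|) ^ 2) :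
    Tendsto
      (fun n : ℕ =>
        (∑ i ∈ Finset.range n, rowSum W n i) ^ 2 /
          ((n : ℝ) * ∑ i ∈ Finset.range n, (rowSum W n i) ^ 2))
      atTop
      (nhds ((∫ t in Set.Icc (0 : ℝ) 1, ∫ t' in Set.Icc (0 : ℝ) 1, |W t t'|) ^ 2 /
        ∫ t in Set.Icc (0 : ℝ) 1, (∫ t' in Set.Icc (0 : ℝ) 1, |W t t'|) ^ 2)) := by
  have hW' : ContinuousOn (Function.uncurry fun t t' => |W t t'|) (Icc 0 1 ×ˢ Icc 0 1) := hW.abs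
  have hrows := tendstoUniformlyOn_gridAverage isCompact_Icc hW'
  have hg := continuousOn_setIntegral_Icc_of_continuousOn_uncurry isCompact_Icc hW'
  have hsq := hrows.comp_of_isBounded (isCompact_Icc.image_of_continuousOn hg).isBounded
    (continuous_pow 2)
  have hmean := tendsto_gridAverage_of_tendstoUniformlyOn hg hrows
  have hmeanSq := tendsto_gridAverage_of_tendstoUniformlyOn (hg.pow 2) hsq
  refine ((hmean.pow 2).div hmeanSq hpos2.ne').congr' ?_
  filter_upwards [eventually_ne_atTop 0] with n hn
  exact (sq_div_mul_eq_div_sq_div (Nat.cast_ne_zero.2 hn)).symm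

/-- The continuous limit implies q-balancedness: the balance ratio of the
discretized row sums converges to `(∫∫|W|)² / ∫(∫|W(t,t')|dt')²dt`. -/
theorem stmt_17 (W : ℝ → ℝ → ℝ)
    (hW : ContinuousOn (Function.uncurry W) (Set.Icc (0 : ℝ) 1 ×ˢ Set.Icc (0 : ℝ) 1))
    (hpos1 : 0 < ∫ t in Set.Icc (0 : ℝ) 1, ∫ t' in Set.Icc (0 : ℝ) 1, |W t t'|)
    (hpos2 : 0 < ∫ t in Set.Icc (0 : ℝ) 1, (∫ t' in Set.Icc (0 : ℝ) 1, |W t t'|) ^ 2) :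
    Tendsto
      (fun n : ℕ =>
        (∑ i ∈ Finset.range n, rowSum W n i) ^ 2 /
          ((n : ℝ) * ∑ i ∈ Finset.range n, (rowSum W n i) ^ 2))
      atTop
      (nhds ((∫ t in Set.Icc (0 : ℝ) 1, ∫ t' in Set.Icc (0 : ℝ) 1, |W t t'|) ^ 2 /
        ∫ t in Set.Icc (0 : ℝ) 1, (∫ t' in Set.Icc (0 : ℝ) 1, |W t t'|) ^ 2)) :=
  stmt_17_general W hW hpos2
end
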